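/- arXiv:1907.05059 — 2 statements merged into one kernel-verified Lean document; each statement's English description precedes it below -/
import Mathlib

section
/- Let $V$ be a real Banach space and let $(V, \|\cdot\|)$, $B : V \to V^*$ strongly monotone with constant $M_B > 0$, $A : V \to V^*$ bounded linear with $\|Au\|_{V^*} \le L_A \|u\|$, $\tau_0 > 0$ with $\tau_0 L_A < M_B - L_j$ where $L_j \ge 0$. Suppose for $h_1, h_2 \in V$, the elements $u_1, u_2 \in V$ satisfy for all $v \in V$: $\langle Bu_i + \tau_0 A h_i, v - u_i\rangle + j(u_i, v) - j(u_i, u_i) \ge \langle F, v - u_i\rangle$, where $j$ satisfies $j(g_1,v_2)+j(g_2,v_1)-j(g_1,v_1)-j(g_2,v_2) \le L_j\|g_1-g_2\|\|v_1-v_2\|$ for all arguments. Then $(M_B - L_j)\|u_1 - u_2\| \le \tau_0 L_A \|h_1 - h_2\|$; in particular the map $h \mapsto u_h$ is a contraction. -/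
/-!
Test the inequality for `u₁` with `v = u₂` and the one for `u₂` with `v = u₁`, and add them:
`F` cancels, and what remains bounds `⟨Bu₁ - Bu₂, u₁ - u₂⟩ + τ₀⟨A(h₁ - h₂), u₁ - u₂⟩` by the
mixed difference of `j`. Strong monotonicity of `B`, the Lipschitz bound on `j` and the bound on
`A` turn this into `(M_B - L_j)‖u₁ - u₂‖² ≤ τ₀ L_A ‖h₁ - h₂‖ ‖u₁ - u₂‖`; divide by `‖u₁ - u₂‖`.
-/

def SolvesVI {V : Type*} [SeminormedAddCommGroup V] [NormedSpace ℝ V]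
    (T F : StrongDual ℝ V) (j : V → V → ℝ) (u : V) : Prop :=
  ∀ v : V, F (v - u) ≤ T (v - u) + j u v - j u u

theorem SolvesVI.sub_apply_le {V : Type*} [SeminormedAddCommGroup V] [NormedSpace ℝ V]
    {T₁ T₂ F : StrongDual ℝ V} {j : V → V → ℝ} {u₁ u₂ : V}
    (hu₁ : SolvesVI T₁ F j u₁) (hu₂ : SolvesVI T₂ F j u₂) :
    T₁ (u₁ - u₂) - T₂ (u₁ - u₂) ≤ j u₁ u₂ + j u₂ u₁ - j u₁ u₁ - j u₂ u₂ := by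
  have h₁ := hu₁ u₂
  have h₂ := hu₂ u₁
  rw [← neg_sub u₁ u₂, map_neg, map_neg] at h₁
  linarith

theorem le_of_mul_sq_le_mul {a b x : ℝ} (h : a * x ^ 2 ≤ b * x) (hx : 0 ≤ x) (hb : 0 ≤ b) :
    a * x ≤ b := by
  rcases hx.eq_or_lt with rfl | hx
  · simpa using hb
  · exact le_of_mul_le_mul_right (by linarith) hx

theorem apply_apply_le_of_norm_apply_le {E V : Type*} [SeminormedAddCommGroup E]
    [SeminormedAddCommGroup V] [NormedSpace ℝ V] {A : E → StrongDual ℝ V} {L : ℝ}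
    (hA : ∀ h, ‖A h‖ ≤ L * ‖h‖) (h : E) (x : V) : A h x ≤ L * ‖h‖ * ‖x‖ :=
  calc A h x ≤ ‖A h‖ * ‖x‖ := (le_abs_self _).trans ((A h).le_opNorm x)
    _ ≤ L * ‖h‖ * ‖x‖ := mul_le_mul_of_nonneg_right (hA h) (norm_nonneg x)

theorem vi_solution_contraction_in_h_general
    {V : Type*} [NormedAddCommGroup V] [NormedSpace ℝ V]
    (B : V → StrongDual ℝ V) (MB : ℝ)
    (hBmono : ∀ u₁ u₂ : V, MB * ‖u₁ - u₂‖ ^ 2 ≤ (B u₁ - B u₂) (u₁ - u₂))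
    (A : V →L[ℝ] StrongDual ℝ V) (LA : ℝ)
    (hA : ∀ u : V, ‖A u‖ ≤ LA * ‖u‖)
    (Lj : ℝ) (τ₀ : ℝ) (hτ₀ : 0 < τ₀)
    (j : V → V → ℝ)
    (hj : ∀ g₁ g₂ v₁ v₂ : V,
      j g₁ v₂ + j g₂ v₁ - j g₁ v₁ - j g₂ v₂ ≤ Lj * ‖g₁ - g₂‖ * ‖v₁ - v₂‖)
    (F : StrongDual ℝ V) (h₁ h₂ u₁ u₂ : V)
    (hvi₁ : ∀ v : V, F (v - u₁) ≤ (B u₁ + τ₀ • A h₁) (v - u₁) + j u₁ v - j u₁ u₁)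
    (hvi₂ : ∀ v : V, F (v - u₂) ≤ (B u₂ + τ₀ • A h₂) (v - u₂) + j u₂ v - j u₂ u₂) :
    (MB - Lj) * ‖u₁ - u₂‖ ≤ τ₀ * LA * ‖h₁ - h₂‖ := by
  have hsum := SolvesVI.sub_apply_le hvi₁ hvi₂
  have hjLip := hj u₁ u₂ u₁ u₂
  have hBu := hBmono u₁ u₂
  have hAnn : 0 ≤ LA * ‖h₁ - h₂‖ := (norm_nonneg _).trans (hA (h₁ - h₂))
  have hAu : A h₂ (u₁ - u₂) - A h₁ (u₁ - u₂) ≤ LA * ‖h₁ - h₂‖ * ‖u₁ - u₂‖ := by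
    rw [← sub_apply, ← map_sub, norm_sub_rev h₁ h₂]
    exact apply_apply_le_of_norm_apply_le hA _ _
  simp only [add_apply, sub_apply, smul_apply, smul_eq_mul] at hsum hBu
  have key : (MB - Lj) * ‖u₁ - u₂‖ ^ 2 ≤ τ₀ * LA * ‖h₁ - h₂‖ * ‖u₁ - u₂‖ := by
    linarith [mul_le_mul_of_nonneg_left hAu hτ₀.le]
  exact le_of_mul_sq_le_mul key (norm_nonneg _) (by rw [mul_assoc]; positivity)

/-- Contraction estimate for the map `h ↦ u_h` in the time-discretized
quasi-variational inequality: `(M_B - L_j)‖u₁ - u₂‖ ≤ τ₀ L_A ‖h₁ - h₂‖`. -/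
theorem vi_solution_contraction_in_h
    {V : Type*} [NormedAddCommGroup V] [NormedSpace ℝ V] [CompleteSpace V]
    (B : V → StrongDual ℝ V) (MB : ℝ) (hMB : 0 < MB)
    (hBmono : ∀ u₁ u₂ : V, MB * ‖u₁ - u₂‖ ^ 2 ≤ (B u₁ - B u₂) (u₁ - u₂))
    (A : V →L[ℝ] StrongDual ℝ V) (LA : ℝ)
    (hA : ∀ u : V, ‖A u‖ ≤ LA * ‖u‖)
    (Lj : ℝ) (hLjnn : 0 ≤ Lj) (τ₀ : ℝ) (hτ₀ : 0 < τ₀)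
    (hsmall : τ₀ * LA < MB - Lj)
    (j : V → V → ℝ)
    (hj : ∀ g₁ g₂ v₁ v₂ : V,
      j g₁ v₂ + j g₂ v₁ - j g₁ v₁ - j g₂ v₂ ≤ Lj * ‖g₁ - g₂‖ * ‖v₁ - v₂‖)
    (F : StrongDual ℝ V) (h₁ h₂ u₁ u₂ : V)
    (hvi₁ : ∀ v : V, F (v - u₁) ≤ (B u₁ + τ₀ • A h₁) (v - u₁) + j u₁ v - j u₁ u₁)
    (hvi₂ : ∀ v : V, F (v - u₂) ≤ (B u₂ + τ₀ • A h₂) (v - u₂) + j u₂ v - j u₂ u₂) :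
    (MB - Lj) * ‖u₁ - u₂‖ ≤ τ₀ * LA * ‖h₁ - h₂‖ :=
  vi_solution_contraction_in_h_general B MB hBmono A LA hA Lj τ₀ hτ₀ j hj F h₁ h₂ u₁ u₂ hvi₁ hvi₂
end

section
/- Let $V^*$ be a real Banach space, $\tau > 0$, and $f : \mathbb{R} \to V^*$ twice continuously differentiable. For $k \ge 2$ set $t_k = k\tau$, $f_\tau^k = \tfrac{1}{\tau}\int_{t_{k-1}}^{t_k} f(t)\, dt$, and $F_\tau^k = \tfrac{1}{\tau}(f_\tau^k - f_\tau^{k-1})$. Then $\Big\|\frac{F_\tau^k - F_\tau^{k-1}}{\tau}\Big\|_{V^*} \le \frac{2\sqrt{3}}{\sqrt{\tau}} \Big(\int_{t_k - 3\tau}^{t_k} \|f''(s)\|_{V^*}^2\, ds\Big)^{1/2}$. -/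
/-!
Shifting the windows turns the second difference of the window integrals into
`∫_{a-τ}^{a} (f t - 2 f (t - τ) + f (t - 2τ)) dt`; the integrand is a first difference of
`t ↦ f t - f (t - τ)`, whose derivative `f' s - f' (s - τ) = ∫_{s-τ}^{s} f''` is bounded by
`∫_{a-3τ}^{a} ‖f''‖`. Hence the second difference is at most `τ² ∫_{a-3τ}^{a} ‖f''‖`, and
Cauchy–Schwarz on an interval of length `3τ` gives the `L²` bound with constant `√3`.
-/

open intervalIntegral Set

theorem sq_intervalIntegral_le_mul_integral_sq {g : ℝ → ℝ} (hg : Continuous g) {x y : ℝ}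
    (hxy : x ≤ y) : (∫ t in x..y, g t) ^ 2 ≤ (y - x) * ∫ t in x..y, g t ^ 2 := by
  set I := ∫ t in x..y, g t
  set J := ∫ t in x..y, g t ^ 2
  have hexpand : ∫ t in x..y, ((y - x) * g t - I) ^ 2 = (y - x) * ((y - x) * J - I ^ 2) := by
    simp only [sub_sq, mul_pow]
    rw [integral_add, integral_sub, integral_const_mul, integral_const]
    · simp only [mul_assoc, integral_const_mul, integral_mul_const, smul_eq_mul]
      ring
    all_goals exact Continuous.intervalIntegrable (by fun_prop) _ _
  have hnonneg : 0 ≤ ∫ t in x..y, ((y - x) * g t - I) ^ 2 :=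
    integral_nonneg hxy fun t _ => sq_nonneg _
  rcases hxy.eq_or_lt with rfl | hlt
  · simp [I]
  · nlinarith

section SecondDifference

variable {E : Type*} [NormedAddCommGroup E] [NormedSpace ℝ E]

theorem integral_sub_integral_comp_sub {f : ℝ → E} (hf : Continuous f) (τ x y : ℝ) :
    (∫ t in x..y, f t) - ∫ t in (x - τ)..(y - τ), f t = ∫ t in x..y, (f t - f (t - τ)) := by
  rw [← integral_comp_sub_right]
  exact (integral_sub (hf.intervalIntegrable x y)
    ((hf.comp (continuous_sub_right τ)).intervalIntegrable x y)).symm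

theorem norm_second_difference_window_integral_le {f f' f'' : ℝ → E}
    (hf : ∀ t, HasDerivAt f (f' t) t) (hf' : ∀ t, HasDerivAt f' (f'' t) t)
    (hf'' : Continuous f'') {τ : ℝ} (hτ : 0 ≤ τ) (a : ℝ) :
    ‖((∫ t in (a - τ)..a, f t) - ∫ t in (a - τ - τ)..(a - τ), f t) -
        ((∫ t in (a - τ - τ)..(a - τ), f t) - ∫ t in (a - τ - τ - τ)..(a - τ - τ), f t)‖ ≤
      τ ^ 2 * ∫ s in (a - 3 * τ)..a, ‖f'' s‖ := by
  set I := ∫ s in (a - 3 * τ)..a, ‖f'' s‖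
  have hfc : Continuous f := continuous_iff_continuousAt.2 fun t => (hf t).continuousAt
  have hf'c : Continuous f' := continuous_iff_continuousAt.2 fun t => (hf' t).continuousAt
  have hΔf' : ∀ s ∈ Icc (a - 2 * τ) a, ‖f' s - f' (s - τ)‖ ≤ I := by
    intro s hs
    calc ‖f' s - f' (s - τ)‖ ≤ ∫ u in (s - τ)..s, ‖f'' u‖ :=
          norm_sub_le_integral_of_norm_deriv_le_of_le (by linarith) hf'c.continuousOn
            (fun u _ => (hf' u).differentiableAt.differentiableWithinAt)
            (.of_forall fun u _ => (hf' u).deriv ▸ le_rfl) (hf''.norm.intervalIntegrable _ _)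
      _ ≤ I := integral_mono_interval (by linarith [hs.1]) (by linarith) hs.2
          (.of_forall fun u => norm_nonneg _) (hf''.norm.intervalIntegrable _ _)
  have hΔ2f : ∀ t ∈ Icc (a - τ) a, ‖(f t - f (t - τ)) - (f (t - τ) - f (t - τ - τ))‖ ≤ I * τ := by
    intro t ht
    have hΔf : ∀ s, HasDerivAt (fun s => f s - f (s - τ)) (f' s - f' (s - τ)) s :=
      fun s => (hf s).sub ((hf (s - τ)).comp_sub_const s τ)
    simpa only [sub_sub_cancel] using
      norm_image_sub_le_of_norm_deriv_le_segment' (a := t - τ) (b := t)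
      (fun s _ => (hΔf s).hasDerivWithinAt)
      (fun s hs => hΔf' s ⟨by linarith [hs.1, ht.1], by linarith [hs.2, ht.2]⟩)
      t (right_mem_Icc.2 (by linarith))
  rw [integral_sub_integral_comp_sub hfc, integral_sub_integral_comp_sub hfc,
    integral_sub_integral_comp_sub (f := fun t => f t - f (t - τ))
      (hfc.sub (hfc.comp (continuous_sub_right τ)))]
  calc _ ≤ I * τ * |a - (a - τ)| := norm_integral_le_of_norm_le_const fun t ht =>
        hΔ2f t (Ioc_subset_Icc_self (uIoc_of_le (show a - τ ≤ a by linarith) ▸ ht))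
    _ = τ ^ 2 * I := by rw [sub_sub_cancel, abs_of_nonneg hτ]; ring

theorem norm_second_difference_window_integral_le_sqrt {f f' f'' : ℝ → E}
    (hf : ∀ t, HasDerivAt f (f' t) t) (hf' : ∀ t, HasDerivAt f' (f'' t) t)
    (hf'' : Continuous f'') {τ : ℝ} (hτ : 0 ≤ τ) (a : ℝ) :
    ‖((∫ t in (a - τ)..a, f t) - ∫ t in (a - τ - τ)..(a - τ), f t) -
        ((∫ t in (a - τ - τ)..(a - τ), f t) - ∫ t in (a - τ - τ - τ)..(a - τ - τ), f t)‖ ≤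
      τ ^ 2 * (Real.sqrt (3 * τ) * Real.sqrt (∫ s in (a - 3 * τ)..a, ‖f'' s‖ ^ 2)) := by
  refine (norm_second_difference_window_integral_le hf hf' hf'' hτ a).trans ?_
  gcongr
  rw [← Real.sqrt_mul (by positivity)]
  refine (le_abs_self _).trans (Real.abs_le_sqrt ?_)
  simpa only [sub_sub_cancel] using
    sq_intervalIntegral_le_mul_integral_sq hf''.norm (x := a - 3 * τ) (y := a) (by linarith)

end SecondDifference

theorem second_divided_difference_average_bound_general
    {E : Type*} [NormedAddCommGroup E] [NormedSpace ℝ E]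
    (τ : ℝ) (hτ : 0 < τ) (f f' f'' : ℝ → E)
    (hderiv : ∀ t, HasDerivAt f (f' t) t)
    (hderiv' : ∀ t, HasDerivAt f' (f'' t) t)
    (hcont : Continuous f'')
    (k : ℕ) (hk : 2 ≤ k)
    (favg : ℕ → E)
    (hfavg : ∀ m : ℕ, favg m = (1 / τ) • ∫ t in (((m : ℝ) - 1) * τ)..((m : ℝ) * τ), f t)
    (F : ℕ → E)
    (hF : ∀ m : ℕ, F m = (1 / τ) • (favg m - favg (m - 1))) :
    ‖(1 / τ) • (F k - F (k - 1))‖ ≤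
      (2 * Real.sqrt 3 / Real.sqrt τ) *
        Real.sqrt (∫ s in ((k : ℝ) * τ - 3 * τ)..((k : ℝ) * τ), ‖f'' s‖ ^ 2) := by
  obtain ⟨n, rfl⟩ : ∃ n, k = n + 2 := ⟨k - 2, by omega⟩
  generalize ha : ((n + 2 : ℕ) : ℝ) * τ = a
  have hwindow (m : ℕ) : favg m = (1 / τ) • ∫ t in ((m : ℝ) * τ - τ)..((m : ℝ) * τ), f t := by
    rw [hfavg, sub_one_mul]
  have hn1 : ((n + 1 : ℕ) : ℝ) * τ = a - τ := by rw [← ha]; push_cast; ring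
  have hn : ((n : ℕ) : ℝ) * τ = a - τ - τ := by rw [← ha]; push_cast; ring
  have hscale : (1 / τ) • (F (n + 2) - F (n + 2 - 1)) = (1 / τ) ^ 3 •
      (((∫ t in (a - τ)..a, f t) - ∫ t in (a - τ - τ)..(a - τ), f t) -
        ((∫ t in (a - τ - τ)..(a - τ), f t) - ∫ t in (a - τ - τ - τ)..(a - τ - τ), f t)) := by
    simp only [hF, show n + 2 - 1 = n + 1 from rfl, show n + 1 - 1 = n from rfl, hwindow, ha,
      hn1, hn]
    module
  rw [hscale, norm_smul, norm_pow, norm_div, norm_one, Real.norm_of_nonneg hτ.le]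
  calc (1 / τ) ^ 3 * ‖_‖
      ≤ (1 / τ) ^ 3 * (τ ^ 2 * (Real.sqrt (3 * τ) *
          Real.sqrt (∫ s in (a - 3 * τ)..a, ‖f'' s‖ ^ 2))) := by
        gcongr
        exact norm_second_difference_window_integral_le_sqrt hderiv hderiv' hcont hτ.le a
    _ = Real.sqrt 3 / Real.sqrt τ * Real.sqrt (∫ s in (a - 3 * τ)..a, ‖f'' s‖ ^ 2) := by
        rw [Real.sqrt_mul (by norm_num)]
        field_simp
        rw [Real.sq_sqrt hτ.le]
    _ ≤ _ := by gcongr; linarith [Real.sqrt_nonneg 3]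

/-- Second divided difference of time averages is controlled by the `L²` norm of `f''`:
`‖(F_τ^k - F_τ^{k-1})/τ‖ ≤ (2√3/√τ) (∫_{t_k-3τ}^{t_k} ‖f''‖²)^{1/2}`. -/
theorem second_divided_difference_average_bound
    {E : Type*} [NormedAddCommGroup E] [NormedSpace ℝ E] [CompleteSpace E]
    (τ : ℝ) (hτ : 0 < τ) (f f' f'' : ℝ → E)
    (hderiv : ∀ t, HasDerivAt f (f' t) t)
    (hderiv' : ∀ t, HasDerivAt f' (f'' t) t)
    (hcont : Continuous f'')
    (k : ℕ) (hk : 2 ≤ k)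
    (favg : ℕ → E)
    (hfavg : ∀ m : ℕ, favg m = (1 / τ) • ∫ t in (((m : ℝ) - 1) * τ)..((m : ℝ) * τ), f t)
    (F : ℕ → E)
    (hF : ∀ m : ℕ, F m = (1 / τ) • (favg m - favg (m - 1))) :
    ‖(1 / τ) • (F k - F (k - 1))‖ ≤
      (2 * Real.sqrt 3 / Real.sqrt τ) *
        Real.sqrt (∫ s in ((k : ℝ) * τ - 3 * τ)..((k : ℝ) * τ), ‖f'' s‖ ^ 2) :=
  second_divided_difference_average_bound_general τ hτ f f' f'' hderiv hderiv' hcont k hk favg hfavg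
    F hF
end
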